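/- Let R̂(η, β) be as in (P2) with D₁√(D₂D₃) = C and C, D₂, D₃ > 0. If 1/D₂ + 1/D₃ > 2, then there exist η ∈ (0,1] and β ∈ (0,1] such that R̂(η, β) > R̂(0, β'), for every β' ∈ [0,1]; equivalently, the optimal sensing duration ratio satisfies η* > 0. -/

import Mathlib

/-- The closed-form approximate average achievable rate `R̂(η, β)` of problem (P2). -/
noncomputable def Rhat (C D1 D2 D3 η β : ℝ) : ℝ :=
  η * Real.logb 2 (1 + C * (1 - β)) +
    (1 - η) * Real.logb 2 (1 + D1 * Real.sqrt ((η * β + D2) * (η * β + D3)))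

/-!
Both steps are the same first-order argument: a function with positive right derivative at a
point exceeds its value there just to the right of it. With `s = 1/D₂ + 1/D₃`, the derivative
of `η ↦ R̂(η, β)` at `η = 0` is, up to the factor `1 / log 2`,
`g(β) = log (1 + C(1 - β)) - log (1 + C) + C β s / (2(1 + C))`.
Since `g(0) = 0` and `g'(0) = C(s - 2) / (2(1 + C)) > 0`, some `β ∈ (0, 1]` has `g(β) > 0`;
for that `β` some `η ∈ (0, 1]` has `R̂(η, β) > R̂(0, β) = log₂ (1 + C)`, and `R̂(0, β')` does not
depend on `β'`.
-/

open Real Filter Topology Set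

theorem eventually_lt_of_hasDerivAt_pos {f : ℝ → ℝ} {f' a : ℝ} (hf : HasDerivAt f f' a)
    (hf' : 0 < f') : ∀ᶠ x in 𝓝[>] a, f a < f x := by
  have hslope : ∀ᶠ x in 𝓝[>] a, 0 < slope f a x :=
    (hf.tendsto_slope.mono_left (nhdsGT_le_nhdsNE a)).eventually_const_lt hf'
  filter_upwards [hslope, self_mem_nhdsWithin] with x hx hax
  rw [slope_def_field] at hx
  exact sub_pos.1 ((div_pos_iff_of_pos_right (sub_pos.2 hax)).1 hx)

theorem exists_mem_Ioc_lt_of_hasDerivAt_pos {f : ℝ → ℝ} {f' a b : ℝ} (hf : HasDerivAt f f' a)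
    (hf' : 0 < f') (hab : a < b) : ∃ x ∈ Ioc a b, f a < f x :=
  let ⟨x, hfx, hx⟩ := ((eventually_lt_of_hasDerivAt_pos hf hf').and (Ioc_mem_nhdsGT hab)).exists
  ⟨x, hx, hfx⟩

theorem Rhat_zero_left {C D1 D2 D3 : ℝ} (hrel : D1 * √(D2 * D3) = C) (β : ℝ) :
    Rhat C D1 D2 D3 0 β = logb 2 (1 + C) := by
  simp only [Rhat, zero_mul, sub_zero, zero_add, hrel, one_mul]

theorem hasDerivAt_Rhat_zero_left {C D1 D2 D3 : ℝ} (hC : 0 < C) (h2 : 0 < D2) (h3 : 0 < D3)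
    (hrel : D1 * √(D2 * D3) = C) (β : ℝ) :
    HasDerivAt (fun η ↦ Rhat C D1 D2 D3 η β)
      ((log (1 + C * (1 - β)) - log (1 + C) + C * β * (1 / D2 + 1 / D3) / (2 * (1 + C)))
        / log 2) 0 := by
  have hD : 0 < D2 * D3 := mul_pos h2 h3
  have hprod : HasDerivAt (fun η : ℝ ↦ (η * β + D2) * (η * β + D3))
      (β * (0 * β + D3) + (0 * β + D2) * β) 0 :=
    ((hasDerivAt_mul_const β).add_const D2).mul ((hasDerivAt_mul_const β).add_const D3)
  have hrate := ((((hprod.sqrt (by simpa using hD.ne')).const_mul D1).const_add 1).log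
    (by simp only [zero_mul, zero_add, hrel]; positivity)).div_const (log 2)
  have hlin := (hasDerivAt_id (0 : ℝ)).mul_const (logb 2 (1 + C * (1 - β)))
  refine (hlin.add (((hasDerivAt_id (0 : ℝ)).const_sub 1).mul hrate)).congr_deriv ?_
  have hs : √(D2 * D3) ^ 2 = D2 * D3 := sq_sqrt hD.le
  simp only [id, sub_zero, zero_mul, zero_add, one_mul, hrel, logb]
  obtain rfl : D1 = C / √(D2 * D3) := by rw [← hrel]; field_simp
  field_simp
  rw [hs]
  ring

theorem exists_log_sub_log_add_pos {C s : ℝ} (hC : 0 < C) (hs : 2 < s) :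
    ∃ β ∈ Ioc (0 : ℝ) 1,
      0 < log (1 + C * (1 - β)) - log (1 + C) + C * β * s / (2 * (1 + C)) := by
  have hlog := ((((hasDerivAt_id (0 : ℝ)).const_sub 1).const_mul C).const_add 1).log
    (by simp only [id_eq, sub_zero, mul_one]; positivity)
  have hlin := (((hasDerivAt_id (0 : ℝ)).const_mul C).mul_const s).div_const (2 * (1 + C))
  have hderiv : HasDerivAt
      (fun β ↦ log (1 + C * (1 - β)) - log (1 + C) + C * β * s / (2 * (1 + C)))
      (C * (s - 2) / (2 * (1 + C))) 0 :=
    ((hlog.sub_const (log (1 + C))).add hlin).congr_deriv (by simp only [id]; field_simp; ring)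
  obtain ⟨β, hβ, hgain⟩ := exists_mem_Ioc_lt_of_hasDerivAt_pos hderiv
    (div_pos (mul_pos hC (sub_pos.2 hs)) (by positivity)) zero_lt_one
  refine ⟨β, hβ, ?_⟩
  simpa only [sub_zero, mul_one, sub_self, mul_zero, zero_mul, zero_div, add_zero] using hgain

theorem stmt_18_general (C D1 D2 D3 : ℝ) (hC : 0 < C) (h2 : 0 < D2)
    (h3 : 0 < D3) (hrel : D1 * Real.sqrt (D2 * D3) = C)
    (hcond : 1 / D2 + 1 / D3 > 2) :
    ∃ η ∈ Set.Ioc (0 : ℝ) 1, ∃ β ∈ Set.Ioc (0 : ℝ) 1,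
      ∀ β' ∈ Set.Icc (0 : ℝ) 1, Rhat C D1 D2 D3 η β > Rhat C D1 D2 D3 0 β' := by
  obtain ⟨β, hβ, hgain⟩ := exists_log_sub_log_add_pos hC hcond
  obtain ⟨η, hη, hRhat⟩ := exists_mem_Ioc_lt_of_hasDerivAt_pos
    (hasDerivAt_Rhat_zero_left hC h2 h3 hrel β) (div_pos hgain (log_pos one_lt_two)) zero_lt_one
  refine ⟨η, hη, β, hβ, fun β' _ ↦ ?_⟩
  rwa [Rhat_zero_left hrel, ← Rhat_zero_left hrel β]

theorem stmt_18 (C D1 D2 D3 : ℝ) (hC : 0 < C) (h1 : 0 < D1) (h2 : 0 < D2)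
    (h3 : 0 < D3) (hrel : D1 * Real.sqrt (D2 * D3) = C)
    (hcond : 1 / D2 + 1 / D3 > 2) :
    ∃ η ∈ Set.Ioc (0 : ℝ) 1, ∃ β ∈ Set.Ioc (0 : ℝ) 1,
      ∀ β' ∈ Set.Icc (0 : ℝ) 1, Rhat C D1 D2 D3 η β > Rhat C D1 D2 D3 0 β' :=
  stmt_18_general C D1 D2 D3 hC h2 h3 hrel hcond
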